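/- arXiv:2310.06793 — 3 statements merged into one kernel-verified Lean document; each statement's English description precedes it below -/
import Mathlib

section
/- Let Y₁,…,Y_p be independent Poisson random variables with means tp₁,…,tp_p where Σp_i = 1, and let (Z₁,…,Z_p) ~ Multinomial(t, (p₁,…,p_p)) for an integer t ≥ 1. Then for any nonnegative function f: ℝ^p → ℝ₊, E[f(Z₁,…,Z_p)] ≤ e√t · E[f(Y₁,…,Y_p)]. -/
/-- The Poisson pmf with mean `λ`. -/
noncomputable def poissonPmf (lam : ℝ) (k : ℕ) : ℝ :=
  Real.exp (-lam) * lam ^ k / (Nat.factorial k)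

/-- The multinomial pmf with `t` trials and probabilities `q`. -/
noncomputable def multinomialPmf {p : ℕ} (t : ℕ) (q : Fin p → ℝ) (a : Fin p → ℕ) : ℝ :=
  (Nat.factorial t : ℝ) / (∏ i, (Nat.factorial (a i) : ℝ)) * ∏ i, q i ^ a i

/-!
On the simplex `∑ aᵢ = t` the product of the Poisson pmfs with means `t qᵢ` equals
`P(Poisson(t) = t)` times the multinomial pmf, so the multinomial expectation is bounded termwise
by `P(Poisson(t) = t)⁻¹` times the Poisson one. By monotonicity of the Stirling sequence,
`t! ≤ e √t (t / e)ᵗ`, i.e. `P(Poisson(t) = t)⁻¹ = t! eᵗ / tᵗ ≤ e √t`.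
-/

open Real Finset
open scoped Nat

theorem Stirling.stirlingSeq_le_exp_one_div_sqrt_two {n : ℕ} (hn : n ≠ 0) :
    Stirling.stirlingSeq n ≤ exp 1 / √2 := by
  obtain ⟨m, rfl⟩ := Nat.exists_eq_add_one.mpr (Nat.pos_of_ne_zero hn)
  simpa using Stirling.stirlingSeq'_antitone (Nat.zero_le m)

theorem Nat.factorial_le_exp_one_mul_sqrt_mul_pow {n : ℕ} (hn : n ≠ 0) :
    (n ! : ℝ) ≤ exp 1 * √n * (n / exp 1) ^ n := by
  have hpos : (0 : ℝ) < √(2 * n) * (n / exp 1) ^ n := by positivity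
  have h := Stirling.stirlingSeq_le_exp_one_div_sqrt_two hn
  rw [Stirling.stirlingSeq, div_le_iff₀ hpos, Real.sqrt_mul zero_le_two] at h
  calc (n ! : ℝ) ≤ exp 1 / √2 * (√2 * √n * (n / exp 1) ^ n) := h
    _ = exp 1 * √n * (n / exp 1) ^ n := by field_simp

theorem poissonPmf_self_pos (n : ℕ) : 0 < poissonPmf n n := by
  rcases n with _ | n <;> simp only [poissonPmf] <;> positivity

theorem inv_poissonPmf_self_le {n : ℕ} (hn : n ≠ 0) :
    (poissonPmf n n)⁻¹ ≤ exp 1 * √n := by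
  have hn' : (0 : ℝ) < n := by positivity
  calc (poissonPmf n n)⁻¹ = n ! * exp n / n ^ n := by
        rw [poissonPmf, Real.exp_neg]; field_simp
    _ ≤ exp 1 * √n * (n / exp 1) ^ n * exp n / n ^ n := by
        gcongr; exact Nat.factorial_le_exp_one_mul_sqrt_mul_pow hn
    _ = exp 1 * √n := by
        rw [div_pow, ← Real.exp_nat_mul, mul_one]; field_simp

theorem prod_poissonPmf_eq_poissonPmf_self_mul_multinomialPmf {p : ℕ} (t : ℕ) (q : Fin p → ℝ)
    (hq : ∑ i, q i = 1) (a : Fin p → ℕ) (ha : ∑ i, a i = t) :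
    ∏ i, poissonPmf (t * q i) (a i) = poissonPmf t t * multinomialPmf t q a := by
  have hexp : ∏ i, exp (-(t * q i)) = exp (-t) := by
    rw [← Real.exp_sum, Finset.sum_neg_distrib, ← Finset.mul_sum, hq, mul_one]
  have hpow : ∏ i, ((t : ℝ) * q i) ^ a i = (t : ℝ) ^ t * ∏ i, q i ^ a i := by
    simp_rw [mul_pow, Finset.prod_mul_distrib, Finset.prod_pow_eq_pow_sum, ha]
  simp only [poissonPmf, multinomialPmf, Finset.prod_div_distrib, Finset.prod_mul_distrib,
    hexp, hpow]
  field_simp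

theorem multinomialPmf_eq_inv_poissonPmf_self_mul_prod {p : ℕ} (t : ℕ) (q : Fin p → ℝ)
    (hq : ∑ i, q i = 1) (a : Fin p → ℕ) (ha : ∑ i, a i = t) :
    multinomialPmf t q a = (poissonPmf t t)⁻¹ * ∏ i, poissonPmf (t * q i) (a i) := by
  rw [prod_poissonPmf_eq_poissonPmf_self_mul_multinomialPmf t q hq a ha,
    inv_mul_cancel_left₀ (poissonPmf_self_pos t).ne']

theorem multinomial_expectation_le_poisson_general {p : ℕ} (t : ℕ) (ht : 1 ≤ t)
    (q : Fin p → ℝ) (hsum : ∑ i, q i = 1)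
    (f : (Fin p → ℝ) → ℝ) :
    (∑' a : Fin p → ℕ,
        if ∑ i, a i = t then
          ENNReal.ofReal (multinomialPmf t q a * f (fun i => (a i : ℝ)))
        else 0) ≤
      ENNReal.ofReal (Real.exp 1 * Real.sqrt t) *
        ∑' a : Fin p → ℕ,
          ENNReal.ofReal ((∏ i, poissonPmf ((t : ℝ) * q i) (a i)) * f (fun i => (a i : ℝ))) := by
  rw [← ENNReal.tsum_mul_left]
  refine ENNReal.tsum_le_tsum fun a => ?_
  split_ifs with ha
  · rw [multinomialPmf_eq_inv_poissonPmf_self_mul_prod t q hsum a ha, mul_assoc,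
      ENNReal.ofReal_mul (inv_nonneg.mpr (poissonPmf_self_pos t).le)]
    gcongr
    exact inv_poissonPmf_self_le (by omega)
  · exact zero_le

/-- Let `Y₁,…,Y_p` be independent Poisson random variables with means `t q₁,…,t q_p`
(`∑ q_i = 1`), and `(Z₁,…,Z_p) ~ Multinomial(t, q)` for an integer `t ≥ 1`.  Then for any
nonnegative function `f : ℝ^p → ℝ₊`, `E[f(Z)] ≤ e √t E[f(Y)]`. -/
theorem multinomial_expectation_le_poisson {p : ℕ} (t : ℕ) (ht : 1 ≤ t)
    (q : Fin p → ℝ) (hq : ∀ i, 0 ≤ q i) (hsum : ∑ i, q i = 1)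
    (f : (Fin p → ℝ) → ℝ) (hf : ∀ x, 0 ≤ f x) :
    (∑' a : Fin p → ℕ,
        if ∑ i, a i = t then
          ENNReal.ofReal (multinomialPmf t q a * f (fun i => (a i : ℝ)))
        else 0) ≤
      ENNReal.ofReal (Real.exp 1 * Real.sqrt t) *
        ∑' a : Fin p → ℕ,
          ENNReal.ofReal ((∏ i, poissonPmf ((t : ℝ) * q i) (a i)) * f (fun i => (a i : ℝ))) :=
  multinomial_expectation_le_poisson_general t ht q hsum f
end

section
/- Let P and P̂ be row-stochastic n×n matrices (transition kernels) of an MDP with actions a ∈ 𝒜, reward function R with values in [0,1], and discount γ ∈ (0,1). For any stationary policy π, the corresponding Q-functions satisfy ‖Q^π_R − Q̂^π_R‖_∞ ≤ (γ/(1−γ)²)·max_{a∈𝒜} ‖P^a − P̂^a‖_{1→∞}. -/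
/-!
Write `ε = max_a ‖P^a − P̂^a‖_{1→∞}` and `‖·‖` for the sup norm. Both value functions are fixed
points of their Bellman operators, so `D = V − V̂` satisfies
`D = γ (P_π V − P̂_π V̂) = γ ((P_π − P̂_π) V + P̂_π D)`. Since `P̂_π` is stochastic and
`‖V‖ ≤ 1/(1−γ)`, this gives `‖D‖ ≤ γ (ε/(1−γ) + ‖D‖)`, i.e. `‖D‖ ≤ γε/(1−γ)²`. The same
decomposition applied to the rows `P^a(x,·)`, `P̂^a(x,·)` bounds `|Q − Q̂|` by
`γ (ε/(1−γ) + γε/(1−γ)²) = γε/(1−γ)²`.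
-/

open Matrix

variable {n : ℕ} {A : Type*} [Fintype A] [Nonempty A]

/-- The transition matrix of the Markov chain induced by a stationary policy `π`. -/
noncomputable def policyMatrix (P : A → Matrix (Fin n) (Fin n) ℝ) (π : Fin n → A) :
    Matrix (Fin n) (Fin n) ℝ :=
  fun x y => P (π x) x y

/-- The value function of a stationary policy `π` in the discounted MDP with kernels `P`,
reward `R` and discount `γ`: `V^π = ∑_{t≥0} γ^t P_π^t r_π`. -/
noncomputable def valueFun (P : A → Matrix (Fin n) (Fin n) ℝ) (R : Fin n → A → ℝ)
    (γ : ℝ) (π : Fin n → A) : Fin n → ℝ :=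
  fun x => ∑' t : ℕ, γ ^ t * ((policyMatrix P π ^ t).mulVec (fun s => R s (π s)) x)

/-- The state-action value function of `π`:
`Q^π(x,a) = R(x,a) + γ E_{x' ∼ P^a(x,·)}[V^π(x')]`. -/
noncomputable def qFun (P : A → Matrix (Fin n) (Fin n) ℝ) (R : Fin n → A → ℝ)
    (γ : ℝ) (π : Fin n → A) : Fin n → A → ℝ :=
  fun x a => R x a + γ * ∑ y, P a x y * valueFun P R γ π y

open Finset

section Stochastic

variable {ι : Type*} [Fintype ι]

lemma abs_dotProduct_le_sum_abs_mul_norm (a u : ι → ℝ) : |a ⬝ᵥ u| ≤ (∑ i, |a i|) * ‖u‖ :=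
  calc |a ⬝ᵥ u| ≤ ∑ i, |a i * u i| := abs_sum_le_sum_abs _ _
    _ ≤ ∑ i, |a i| * ‖u‖ := sum_le_sum fun i _ => by
        rw [abs_mul, ← Real.norm_eq_abs (u i)]
        exact mul_le_mul_of_nonneg_left (norm_le_pi_norm u i) (abs_nonneg _)
    _ = (∑ i, |a i|) * ‖u‖ := (sum_mul ..).symm

lemma abs_dotProduct_sub_dotProduct_le {p q : ι → ℝ} (hq0 : ∀ i, 0 ≤ q i) (hq1 : ∑ i, q i = 1)
    (v w : ι → ℝ) : |p ⬝ᵥ v - q ⬝ᵥ w| ≤ (∑ i, |p i - q i|) * ‖v‖ + ‖v - w‖ := by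
  have hq : ∑ i, |q i| = 1 := by simpa only [abs_of_nonneg (hq0 _)] using hq1
  calc |p ⬝ᵥ v - q ⬝ᵥ w| = |(p - q) ⬝ᵥ v + q ⬝ᵥ (v - w)| := by
        rw [sub_dotProduct, dotProduct_sub]; ring_nf
    _ ≤ |(p - q) ⬝ᵥ v| + |q ⬝ᵥ (v - w)| := abs_add_le _ _
    _ ≤ (∑ i, |p i - q i|) * ‖v‖ + ‖v - w‖ := by
        gcongr
        · exact abs_dotProduct_le_sum_abs_mul_norm (p - q) v
        · simpa only [hq, one_mul] using abs_dotProduct_le_sum_abs_mul_norm q (v - w)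

variable [DecidableEq ι] {M N : Matrix ι ι ℝ}

lemma norm_mulVec_le_of_mem_rowStochastic (hM : M ∈ rowStochastic ℝ ι) (v : ι → ℝ) :
    ‖M *ᵥ v‖ ≤ ‖v‖ := by
  refine (pi_norm_le_iff_of_nonneg (norm_nonneg v)).2 fun i => ?_
  have hrow : ∑ j, |M i j| = 1 := by
    simpa only [abs_of_nonneg (nonneg_of_mem_rowStochastic hM)]
      using sum_row_of_mem_rowStochastic hM i
  exact (abs_dotProduct_le_sum_abs_mul_norm (M i) v).trans_eq (by rw [hrow, one_mul])

lemma norm_sub_le_of_eq_add_smul_mulVec {γ ε : ℝ} {r v w : ι → ℝ} (hN : N ∈ rowStochastic ℝ ι)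
    (hγ0 : 0 ≤ γ) (hγ1 : γ < 1) (hε : 0 ≤ ε) (hMN : ∀ i, ∑ j, |M i j - N i j| ≤ ε)
    (hv : v = r + γ • M *ᵥ v) (hw : w = r + γ • N *ᵥ w) :
    ‖v - w‖ ≤ γ * ε * ‖v‖ / (1 - γ) := by
  have hrow : ∀ i, |(v - w) i| ≤ γ * (ε * ‖v‖ + ‖v - w‖) := fun i => by
    have hdiff : (v - w) i = γ * (M i ⬝ᵥ v - N i ⬝ᵥ w) := by
      rw [Pi.sub_apply, congrFun hv i, congrFun hw i]
      simp only [Pi.add_apply, Pi.smul_apply, smul_eq_mul, mulVec]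
      ring
    rw [hdiff, abs_mul, abs_of_nonneg hγ0]
    gcongr
    refine (abs_dotProduct_sub_dotProduct_le (fun j => nonneg_of_mem_rowStochastic hN)
      (sum_row_of_mem_rowStochastic hN i) v w).trans ?_
    gcongr
    exact hMN i
  have hnorm : ‖v - w‖ ≤ γ * (ε * ‖v‖ + ‖v - w‖) :=
    (pi_norm_le_iff_of_nonneg (by positivity)).2 hrow
  rw [le_div_iff₀ (by linarith)]
  nlinarith

lemma abs_dotProduct_sub_le_of_eq_add_smul_mulVec {γ ε : ℝ} {p q r v w : ι → ℝ}
    (hq0 : ∀ i, 0 ≤ q i) (hq1 : ∑ i, q i = 1) (hpq : ∑ i, |p i - q i| ≤ ε)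
    (hN : N ∈ rowStochastic ℝ ι) (hγ0 : 0 ≤ γ) (hγ1 : γ < 1) (hε : 0 ≤ ε)
    (hMN : ∀ i, ∑ j, |M i j - N i j| ≤ ε)
    (hv : v = r + γ • M *ᵥ v) (hw : w = r + γ • N *ᵥ w) :
    |p ⬝ᵥ v - q ⬝ᵥ w| ≤ ε * ‖v‖ / (1 - γ) :=
  calc |p ⬝ᵥ v - q ⬝ᵥ w| ≤ (∑ i, |p i - q i|) * ‖v‖ + ‖v - w‖ :=
        abs_dotProduct_sub_dotProduct_le hq0 hq1 v w
    _ ≤ ε * ‖v‖ + γ * ε * ‖v‖ / (1 - γ) := by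
        gcongr
        exact norm_sub_le_of_eq_add_smul_mulVec hN hγ0 hγ1 hε hMN hv hw
    _ = ε * ‖v‖ / (1 - γ) := by field_simp [(by linarith : (1 - γ) ≠ 0)]; ring

end Stochastic

section DiscountedValue

variable {ι : Type*} [Fintype ι] [DecidableEq ι] {M : Matrix ι ι ℝ} {γ : ℝ}

noncomputable def discountedValue (M : Matrix ι ι ℝ) (γ : ℝ) (r : ι → ℝ) : ι → ℝ :=
  fun x => ∑' t : ℕ, γ ^ t * (M ^ t *ᵥ r) x

variable (hM : M ∈ rowStochastic ℝ ι) (hγ0 : 0 ≤ γ) (hγ1 : γ < 1) (r : ι → ℝ)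
include hM hγ0

lemma norm_discounted_pow_mulVec_apply_le (t : ℕ) (x : ι) :
    ‖γ ^ t * (M ^ t *ᵥ r) x‖ ≤ ‖r‖ * γ ^ t := by
  rw [norm_mul, norm_pow, Real.norm_of_nonneg hγ0, mul_comm]
  gcongr
  exact (norm_le_pi_norm _ x).trans (norm_mulVec_le_of_mem_rowStochastic (pow_mem hM t) r)

include hγ1

lemma summable_discounted_pow_mulVec_apply (x : ι) :
    Summable fun t : ℕ => γ ^ t * (M ^ t *ᵥ r) x :=
  .of_norm_bounded ((summable_geometric_of_lt_one hγ0 hγ1).mul_left ‖r‖)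
    (norm_discounted_pow_mulVec_apply_le hM hγ0 r · x)

lemma norm_discountedValue_le : ‖discountedValue M γ r‖ ≤ ‖r‖ / (1 - γ) :=
  (pi_norm_le_iff_of_nonneg (div_nonneg (norm_nonneg r) (by linarith))).2 fun x =>
    tsum_of_norm_bounded ((hasSum_geometric_of_lt_one hγ0 hγ1).mul_left ‖r‖)
      (norm_discounted_pow_mulVec_apply_le hM hγ0 r · x)

lemma discountedValue_eq_add_smul_mulVec :
    discountedValue M γ r = r + γ • M *ᵥ discountedValue M γ r := by
  funext x
  have hsucc (t : ℕ) : γ ^ (t + 1) * (M ^ (t + 1) *ᵥ r) x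
      = ∑ y, γ * M x y * (γ ^ t * (M ^ t *ᵥ r) y) := by
    rw [pow_succ' γ, pow_succ' M, ← mulVec_mulVec, mulVec, dotProduct, mul_sum]
    exact sum_congr rfl fun y _ => by ring
  simp only [discountedValue, Pi.add_apply, Pi.smul_apply, smul_eq_mul]
  rw [(summable_discounted_pow_mulVec_apply hM hγ0 hγ1 r x).tsum_eq_zero_add]
  simp only [hsucc, pow_zero, one_mul, one_mulVec]
  rw [Summable.tsum_finsetSum fun y _ =>
    (summable_discounted_pow_mulVec_apply hM hγ0 hγ1 r y).mul_left _]
  simp only [tsum_mul_left, mul_assoc, ← mul_sum]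
  rfl

end DiscountedValue

/-- If `{P^a}` and `{P̂^a}` are row-stochastic kernels, rewards lie in `[0,1]` and
`γ ∈ (0,1)`, then for any stationary policy `π`,
`‖Q^π_R − Q̂^π_R‖_∞ ≤ (γ/(1−γ)²) max_a ‖P^a − P̂^a‖_{1→∞}`. -/
theorem qFun_diff_le_kernel_diff
    (P Phat : A → Matrix (Fin n) (Fin n) ℝ)
    (hP : ∀ a x, (∀ y, 0 ≤ P a x y) ∧ ∑ y, P a x y = 1)
    (hPhat : ∀ a x, (∀ y, 0 ≤ Phat a x y) ∧ ∑ y, Phat a x y = 1)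
    (R : Fin n → A → ℝ) (hR : ∀ x a, R x a ∈ Set.Icc (0 : ℝ) 1)
    (γ : ℝ) (hγ : γ ∈ Set.Ioo (0 : ℝ) 1)
    (π : Fin n → A) :
    (⨆ x, ⨆ a, |qFun P R γ π x a - qFun Phat R γ π x a|) ≤
      γ / (1 - γ) ^ 2 * ⨆ a, ⨆ x, ∑ y, |P a x y - Phat a x y| := by
  obtain ⟨hγ0, hγ1⟩ := hγ
  set ε := ⨆ a, ⨆ x, ∑ y, |P a x y - Phat a x y|
  have hε (a : A) (x : Fin n) : ∑ y, |P a x y - Phat a x y| ≤ ε :=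
    le_ciSup_of_le (Set.finite_range _).bddAbove a
      (le_ciSup (f := fun x => ∑ y, |P a x y - Phat a x y|) (Set.finite_range _).bddAbove x)
  have hε0 : 0 ≤ ε :=
    Real.iSup_nonneg fun _ => Real.iSup_nonneg fun _ => sum_nonneg fun _ _ => abs_nonneg _
  have hM : policyMatrix P π ∈ rowStochastic ℝ (Fin n) :=
    mem_rowStochastic_iff_sum.2 ⟨fun x y => (hP _ x).1 y, fun x => (hP _ x).2⟩
  have hMhat : policyMatrix Phat π ∈ rowStochastic ℝ (Fin n) :=
    mem_rowStochastic_iff_sum.2 ⟨fun x y => (hPhat _ x).1 y, fun x => (hPhat _ x).2⟩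
  set r : Fin n → ℝ := fun s => R s (π s)
  have hr : ‖r‖ ≤ 1 := (pi_norm_le_iff_of_nonneg zero_le_one).2 fun s =>
    abs_le.2 ⟨by linarith [(hR s (π s)).1], (hR s (π s)).2⟩
  -- `valueFun P R γ π` unfolds to `discountedValue (policyMatrix P π) γ r`.
  have hV : ‖valueFun P R γ π‖ ≤ 1 / (1 - γ) :=
    (norm_discountedValue_le hM hγ0.le hγ1 r).trans (by gcongr)
  refine Real.iSup_le (fun x => Real.iSup_le (fun a => ?_) (by positivity)) (by positivity)
  calc |qFun P R γ π x a - qFun Phat R γ π x a|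
      = γ * |P a x ⬝ᵥ valueFun P R γ π - Phat a x ⬝ᵥ valueFun Phat R γ π| := by
        rw [← abs_of_pos hγ0, ← abs_mul, abs_of_pos hγ0, mul_sub]
        simp only [qFun, add_sub_add_left_eq_sub]
        rfl
    _ ≤ γ * (ε * ‖valueFun P R γ π‖ / (1 - γ)) := by
        gcongr
        exact abs_dotProduct_sub_le_of_eq_add_smul_mulVec (hPhat a x).1 (hPhat a x).2 (hε a x)
          hMhat hγ0.le hγ1 hε0 (fun x => hε (π x) x)
          (discountedValue_eq_add_smul_mulVec hM hγ0.le hγ1 r)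
          (discountedValue_eq_add_smul_mulVec hMhat hγ0.le hγ1 r)
    _ ≤ γ * (ε * (1 / (1 - γ)) / (1 - γ)) := by gcongr
    _ = γ / (1 - γ) ^ 2 * ε := by field_simp
end

section
/- Let M ∈ ℝ^{n×n} have nonnegative entries with every row sum positive, let P be its row-normalization P_{i,:} = M_{i,:}/‖M_{i,:}‖₁, and let M̂ ∈ ℝ^{n×n} with row-normalization P̂_{i,:} = (M̂_{i,:})₊/‖(M̂_{i,:})₊‖₁ whenever ‖(M̂_{i,:})₊‖₁ > 0 (and uniform otherwise). If ‖(M̂_{i,:})₊‖₁ > 0 for all i, then ‖P̂ − P‖_{1→∞} ≤ 2√n·‖M̂ − M‖_{2→∞} / min_j ‖M_{j,:}‖₁. -/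
/-!
Row by row, write `a = (M̂_{i,:})₊` and `b = M_{i,:}`. Splitting
`a/‖a‖₁ - b/‖b‖₁ = a (‖a‖₁⁻¹ - ‖b‖₁⁻¹) + (a - b)/‖b‖₁` and using the reverse triangle inequality
`|‖a‖₁ - ‖b‖₁| ≤ ‖a - b‖₁` bounds the ℓ1 error of the normalized row by `2‖a - b‖₁/‖b‖₁`.
Since `b ≥ 0`, taking positive parts does not increase the distance to `b`, so
`‖a - b‖₁ ≤ ‖M̂_{i,:} - M_{i,:}‖₁ ≤ √n ‖M̂_{i,:} - M_{i,:}‖₂`, and `‖b‖₁` is at least the minimal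
row sum of `M`.
-/

/-- `‖A‖_{1→∞}`: the maximum ℓ1-norm of the rows of `A`. -/
noncomputable def norm1toInf {n m : ℕ} (A : Matrix (Fin n) (Fin m) ℝ) : ℝ :=
  ⨆ i, ∑ j, |A i j|

/-- `‖A‖_{2→∞}`: the maximum ℓ2-norm of the rows of `A`. -/
noncomputable def norm2toInf {n m : ℕ} (A : Matrix (Fin n) (Fin m) ℝ) : ℝ :=
  ⨆ i, Real.sqrt (∑ j, (A i j) ^ 2)

open Finset

section RowNormalization

variable {ι : Type*} [Fintype ι]

theorem abs_sum_abs_sub_sum_abs_le (a b : ι → ℝ) :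
    |(∑ i, |a i|) - (∑ i, |b i|)| ≤ ∑ i, |a i - b i| := by
  rw [← sum_sub_distrib]
  exact (abs_sum_le_sum_abs _ _).trans (sum_le_sum fun i _ => abs_abs_sub_abs_le_abs_sub _ _)

theorem mul_abs_inv_sub_inv_le {s t : ℝ} (hs : 0 ≤ s) (ht : 0 < t) :
    s * |s⁻¹ - t⁻¹| ≤ |t - s| / t := by
  rcases hs.eq_or_lt with rfl | hs
  · simp only [zero_mul]
    positivity
  · rw [inv_sub_inv hs.ne' ht.ne', abs_div, abs_of_pos (mul_pos hs ht), ← mul_div_assoc,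
      mul_div_mul_left _ _ hs.ne']

/-- `a = 0` is allowed: its normalization is `0` since `x / 0 = 0`. -/
theorem sum_abs_div_sum_abs_sub_div_sum_abs_le (a b : ι → ℝ) (hb : 0 < ∑ i, |b i|) :
    ∑ i, |a i / (∑ k, |a k|) - b i / (∑ k, |b k|)| ≤ 2 * (∑ i, |a i - b i|) / ∑ k, |b k| := by
  set sa := ∑ k, |a k|
  set sb := ∑ k, |b k|
  set d := ∑ i, |a i - b i|
  have hterm : ∀ i, |a i / sa - b i / sb| ≤ |a i| * |sa⁻¹ - sb⁻¹| + |a i - b i| / sb := by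
    intro i
    calc |a i / sa - b i / sb| = |a i * (sa⁻¹ - sb⁻¹) + (a i - b i) / sb| := by ring_nf
      _ ≤ |a i * (sa⁻¹ - sb⁻¹)| + |(a i - b i) / sb| := abs_add_le _ _
      _ = |a i| * |sa⁻¹ - sb⁻¹| + |a i - b i| / sb := by rw [abs_mul, abs_div, abs_of_pos hb]
  calc ∑ i, |a i / sa - b i / sb|
      ≤ ∑ i, (|a i| * |sa⁻¹ - sb⁻¹| + |a i - b i| / sb) := sum_le_sum fun i _ => hterm i
    _ = sa * |sa⁻¹ - sb⁻¹| + d / sb := by rw [sum_add_distrib, ← sum_mul, ← sum_div]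
    _ ≤ |sb - sa| / sb + d / sb := by
        gcongr
        exact mul_abs_inv_sub_inv_le (sum_nonneg fun k _ => abs_nonneg (a k)) hb
    _ ≤ d / sb + d / sb := by
        gcongr
        rw [abs_sub_comm]
        exact abs_sum_abs_sub_sum_abs_le a b
    _ = 2 * d / sb := by ring

theorem sum_abs_le_sqrt_card_mul_sqrt_sum_sq (x : ι → ℝ) :
    ∑ i, |x i| ≤ √(Fintype.card ι) * √(∑ i, x i ^ 2) := by
  simpa using Real.sum_mul_le_sqrt_mul_sqrt univ (fun _ => (1 : ℝ)) (fun i => |x i|)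

end RowNormalization

theorem abs_max_zero_sub_le {α : Type*} [AddCommGroup α] [LinearOrder α] [IsOrderedAddMonoid α]
    {x y : α} (hy : 0 ≤ y) : |max 0 x - y| ≤ |x - y| := by
  simpa only [max_comm x, max_eq_left hy] using abs_max_sub_max_le_abs x y 0

section MatrixNorms

variable {n m : ℕ}

theorem sqrt_sum_sq_le_norm2toInf (A : Matrix (Fin n) (Fin m) ℝ) (i : Fin n) :
    √(∑ j, A i j ^ 2) ≤ norm2toInf A :=
  le_ciSup (f := fun i => √(∑ j, A i j ^ 2)) (Finite.bddAbove_range _) i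

theorem norm2toInf_nonneg (A : Matrix (Fin n) (Fin m) ℝ) : 0 ≤ norm2toInf A :=
  Real.iSup_nonneg fun _ => Real.sqrt_nonneg _

theorem norm1toInf_le {A : Matrix (Fin n) (Fin m) ℝ} {c : ℝ} (h : ∀ i, ∑ j, |A i j| ≤ c)
    (hc : 0 ≤ c) : norm1toInf A ≤ c :=
  Real.iSup_le h hc

end MatrixNorms

theorem row_normalization_error_general {n : ℕ}
    (M Mhat : Matrix (Fin n) (Fin n) ℝ)
    (hMnonneg : ∀ i j, 0 ≤ M i j)
    (hMrow : ∀ i, 0 < ∑ j, |M i j|)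
    (P Phat : Matrix (Fin n) (Fin n) ℝ)
    (hP : ∀ i j, P i j = M i j / ∑ k, |M i k|)
    (hPhat : ∀ i j, Phat i j = max 0 (Mhat i j) / ∑ k, |max 0 (Mhat i k)|) :
    norm1toInf (Phat - P) ≤
      2 * Real.sqrt n * norm2toInf (Mhat - M) / ⨅ j, ∑ k, |M j k| := by
  have hmin_nonneg : 0 ≤ ⨅ j, ∑ k, |M j k| :=
    Real.iInf_nonneg fun j => sum_nonneg fun k _ => abs_nonneg (M j k)
  have hN := norm2toInf_nonneg (Mhat - M)
  refine norm1toInf_le (fun i => ?_) (by positivity)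
  have : Nonempty (Fin n) := ⟨i⟩
  obtain ⟨j, hj⟩ := exists_eq_ciInf_of_finite (f := fun j => ∑ k, |M j k|)
  have hmin_pos : 0 < ⨅ j, ∑ k, |M j k| := hj ▸ hMrow j
  have hdist : ∑ k, |max 0 (Mhat i k) - M i k| ≤ √n * norm2toInf (Mhat - M) :=
    calc ∑ k, |max 0 (Mhat i k) - M i k|
        ≤ ∑ k, |(Mhat - M) i k| := sum_le_sum fun k _ => abs_max_zero_sub_le (hMnonneg i k)
      _ ≤ √n * √(∑ k, (Mhat - M) i k ^ 2) := by
          simpa using sum_abs_le_sqrt_card_mul_sqrt_sum_sq ((Mhat - M) i)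
      _ ≤ √n * norm2toInf (Mhat - M) := by gcongr; exact sqrt_sum_sq_le_norm2toInf _ i
  calc ∑ j, |(Phat - P) i j|
      = ∑ j, |max 0 (Mhat i j) / (∑ k, |max 0 (Mhat i k)|) - M i j / (∑ k, |M i k|)| := by
        simp only [Matrix.sub_apply, hP, hPhat]
    _ ≤ 2 * (∑ k, |max 0 (Mhat i k) - M i k|) / ∑ k, |M i k| :=
        sum_abs_div_sum_abs_sub_div_sum_abs_le _ _ (hMrow i)
    _ ≤ 2 * (√n * norm2toInf (Mhat - M)) / ⨅ j, ∑ k, |M j k| := by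
        gcongr
        exact ciInf_le (f := fun j => ∑ k, |M j k|) (Finite.bddBelow_range _) i
    _ = 2 * √n * norm2toInf (Mhat - M) / ⨅ j, ∑ k, |M j k| := by ring

/-- Let `M` be entrywise nonnegative with positive row sums, `P` its row ℓ1-normalization,
and `P̂` the row ℓ1-normalization of the positive part of `M̂` (assumed to have positive
row ℓ1-norms).  Then `‖P̂ − P‖_{1→∞} ≤ 2 √n ‖M̂ − M‖_{2→∞} / min_j ‖M_{j,:}‖₁`. -/
theorem row_normalization_error {n : ℕ} (hn : 0 < n)
    (M Mhat : Matrix (Fin n) (Fin n) ℝ)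
    (hMnonneg : ∀ i j, 0 ≤ M i j)
    (hMrow : ∀ i, 0 < ∑ j, |M i j|)
    (hMhatrow : ∀ i, 0 < ∑ j, max 0 (Mhat i j))
    (P Phat : Matrix (Fin n) (Fin n) ℝ)
    (hP : ∀ i j, P i j = M i j / ∑ k, |M i k|)
    (hPhat : ∀ i j, Phat i j = max 0 (Mhat i j) / ∑ k, |max 0 (Mhat i k)|) :
    norm1toInf (Phat - P) ≤
      2 * Real.sqrt n * norm2toInf (Mhat - M) / ⨅ j, ∑ k, |M j k| :=
  row_normalization_error_general M Mhat hMnonneg hMrow P Phat hP hPhat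
end
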